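/- Define φ(s) = (e^s + e^(L-s))/(1 + e^L) for 0 ≤ s ≤ L with L > 0. Then ∫₀^L φ(s)² ds ≤ 6/5. -/

import Mathlib

/-! With `x = e^L`, the integral equals `(x² - 1 + 2Lx) / (1 + x)²`, so the bound amounts to
`10 L x ≤ x² + 12 x + 11`. This follows from the tangent-line bound `L ≤ x / 11 + 7 / 5`
(i.e. `1 + t ≤ eᵗ` at `t = L - 12/5`, using `11 ≤ e^{12/5}`) and `(x - 11)² ≥ 0`. -/

open Real

lemma eleven_le_exp_twelve_fifths : (11 : ℝ) ≤ exp (12 / 5) := by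
  have h : exp 1 ^ 12 = exp (12 / 5) ^ 5 := by
    rw [← exp_nat_mul, ← exp_nat_mul]; norm_num
  refine le_of_pow_le_pow_left₀ (n := 5) (by norm_num) (exp_pos _).le ?_
  calc (11 : ℝ) ^ 5 ≤ 2.7182818283 ^ 12 := by norm_num
    _ ≤ exp 1 ^ 12 := pow_le_pow_left₀ (by norm_num) exp_one_gt_d9.le 12
    _ = exp (12 / 5) ^ 5 := h

lemma le_exp_div_eleven_add (L : ℝ) : L ≤ exp L / 11 + 7 / 5 := by
  have tangent : L - 12 / 5 + 1 ≤ exp L / exp (12 / 5) := by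
    rw [← exp_sub]; exact add_one_le_exp _
  have : exp L / exp (12 / 5) ≤ exp L / 11 :=
    div_le_div_of_nonneg_left (exp_pos L).le (by norm_num) eleven_le_exp_twelve_fifths
  linarith

lemma ten_mul_mul_exp_le (L : ℝ) : 10 * L * exp L ≤ exp L ^ 2 + 12 * exp L + 11 := by
  nlinarith [mul_le_mul_of_nonneg_right (le_exp_div_eleven_add L) (exp_pos L).le,
    sq_nonneg (exp L - 11)]

lemma hasDerivAt_antideriv_exp_add_exp_sub_sq (c s : ℝ) :
    HasDerivAt (fun t => exp (2 * t) / 2 + 2 * exp c * t - exp (2 * c - 2 * t) / 2)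
      ((exp s + exp (c - s)) ^ 2) s := by
  have hup : HasDerivAt (fun t => exp (2 * t)) (exp (2 * s) * 2) s := by
    simpa using ((hasDerivAt_id s).const_mul 2).exp
  have hdown : HasDerivAt (fun t => exp (2 * c - 2 * t)) (exp (2 * c - 2 * s) * (-2)) s := by
    simpa using (((hasDerivAt_id s).const_mul 2).const_sub (2 * c)).exp
  have hlin : HasDerivAt (fun t => 2 * exp c * t) (2 * exp c) s := by
    simpa using (hasDerivAt_id s).const_mul (2 * exp c)
  refine (((hup.div_const 2).add hlin).sub (hdown.div_const 2)).congr_deriv ?_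
  have e1 : exp (2 * s) = exp s ^ 2 := by rw [← exp_nat_mul]; ring_nf
  have e2 : exp (2 * c - 2 * s) = exp (c - s) ^ 2 := by rw [← exp_nat_mul]; ring_nf
  have e3 : exp c = exp s * exp (c - s) := by rw [← exp_add]; ring_nf
  rw [e1, e2, e3]; ring

lemma integral_exp_add_exp_sub_sq (L : ℝ) :
    ∫ s in (0 : ℝ)..L, (exp s + exp (L - s)) ^ 2 = exp L ^ 2 - 1 + 2 * L * exp L := by
  rw [intervalIntegral.integral_eq_sub_of_hasDerivAt
    (fun s _ => hasDerivAt_antideriv_exp_add_exp_sub_sq L s)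
    ((by fun_prop : Continuous _).intervalIntegrable _ _)]
  have e : exp (2 * L) = exp L ^ 2 := by rw [← exp_nat_mul]; ring_nf
  simp only [mul_zero, sub_zero, sub_self, exp_zero, e]
  ring

theorem integral_phi_sq_le_general (L : ℝ) :
    ∫ s in (0 : ℝ)..L, ((Real.exp s + Real.exp (L - s)) / (1 + Real.exp L)) ^ 2 ≤ 6 / 5 := by
  simp_rw [div_pow]
  rw [intervalIntegral.integral_div, integral_exp_add_exp_sub_sq, div_le_iff₀ (by positivity)]
  nlinarith [ten_mul_mul_exp_le L]

/-- For any `L > 0` and `φ(s) = (e^s + e^(L-s))/(1 + e^L)`, the integral of `φ²`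
over `[0, L]` is at most `6/5`. -/
theorem integral_phi_sq_le (L : ℝ) (hL : 0 < L) :
    ∫ s in (0 : ℝ)..L, ((Real.exp s + Real.exp (L - s)) / (1 + Real.exp L)) ^ 2 ≤ 6 / 5 :=
  integral_phi_sq_le_general L
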